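/- arXiv:1303.0353 — 4 statements merged into one kernel-verified Lean document; each statement's English description precedes it below -/
import Mathlib

section
/- Let A, B, C be square matrices and M, N matrices of compatible sizes. Then rank(A(MN) - (MN)C) ≤ rank(AM - MB) + rank(BN - NC). That is, the displacement rank of a product MN with respect to (A,C) is at most the sum of displacement ranks of M w.r.t. (A,B) and of N w.r.t. (B,C). -/
theorem Matrix.rank_add_le {K m n : Type*} [Field K] [Fintype n]
    (X Y : Matrix m n K) : (X + Y).rank ≤ X.rank + Y.rank := by
  unfold Matrix.rank
  rw [Matrix.mulVecLin_add]
  exact (Submodule.finrank_mono (LinearMap.range_add_le _ _)).trans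
    (Submodule.finrank_add_le_finrank_add_finrank _ _)

theorem Matrix.displacement_mul {R l m n : Type*} [Ring R] [Fintype l] [Fintype m] [Fintype n]
    (A : Matrix l l R) (M : Matrix l m R) (B : Matrix m m R) (N : Matrix m n R)
    (C : Matrix n n R) :
    A * (M * N) - (M * N) * C = (A * M - M * B) * N + M * (B * N - N * C) := by
  simp only [Matrix.sub_mul, Matrix.mul_sub, Matrix.mul_assoc]
  abel

theorem displacement_rank_product {K : Type*} [Field K] (m k p : ℕ)
    (A : Matrix (Fin m) (Fin m) K) (M : Matrix (Fin m) (Fin k) K)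
    (B : Matrix (Fin k) (Fin k) K) (N : Matrix (Fin k) (Fin p) K)
    (C : Matrix (Fin p) (Fin p) K) :
    (A * (M * N) - (M * N) * C).rank ≤ (A * M - M * B).rank + (B * N - N * C).rank := by
  rw [Matrix.displacement_mul A M B N C]
  calc ((A * M - M * B) * N + M * (B * N - N * C)).rank
      ≤ ((A * M - M * B) * N).rank + (M * (B * N - N * C)).rank := Matrix.rank_add_le _ _
    _ ≤ (A * M - M * B).rank + (B * N - N * C).rank :=
        add_le_add (Matrix.rank_mul_le_left _ _) (Matrix.rank_mul_le_right _ _)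
end

section
/- Let s_1,...,s_n be scalars, V = (s_i^{j-1})_{i,j=1}^n the Vandermonde matrix, D_s = diag(s_1,...,s_n), and Z_e the unit e-circulant shift matrix. Then V·Z_e = D_s·V - ((s_i^n - e))_{i=1}^n · e_n^T, where e_n is the last standard basis vector. Consequently rank(D_s V - V Z_e) ≤ 1, with equality to 0 when s_i^n = e for all i. -/
/-! Right multiplication by `Z_e` moves column `j + 1` into column `j` and `e` times column `0`
into the last column, while left multiplication by `D_s` turns the Vandermonde column `s^j`
into `s^(j+1)`. The two therefore agree except in the last column, where `s^n` meets `e`, so the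
displacement `D_s V - V Z_e` is the rank-one matrix `(s^n - e) e_nᵀ`. -/

/-- The `n×n` unit `e`-circulant shift matrix `Z_e`. -/
def Zmat (n : ℕ) {K : Type*} [Field K] (e : K) : Matrix (Fin n) (Fin n) K :=
  Matrix.of fun i j =>
    if (i : ℕ) = (j : ℕ) + 1 then 1
    else if (i : ℕ) = 0 ∧ (j : ℕ) = n - 1 then e else 0

open Matrix

section Zmat

variable {K : Type*} [Field K] {n : ℕ} (e : K) (A : Matrix (Fin n) (Fin n) K)

theorem mul_Zmat_apply_of_succ_lt (i j : Fin n) (hj : (j : ℕ) + 1 < n) :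
    (A * Zmat n e) i j = A i ⟨j + 1, hj⟩ := by
  rw [mul_apply, Finset.sum_eq_single ⟨j + 1, hj⟩]
  · simp [Zmat]
  · intro k _ hk
    have hk' : (k : ℕ) ≠ j + 1 := fun h => hk (Fin.ext h)
    simp [Zmat, hk', show (j : ℕ) ≠ n - 1 by omega]
  · simp

theorem mul_Zmat_apply_of_eq_pred (i j : Fin n) (hj : (j : ℕ) = n - 1) :
    (A * Zmat n e) i j = A i ⟨0, j.pos⟩ * e := by
  rw [mul_apply, Finset.sum_eq_single ⟨0, j.pos⟩]
  · simp [Zmat, hj]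
  · intro k _ hk
    have hk' : (k : ℕ) ≠ 0 := fun h => hk (Fin.ext h)
    simp [Zmat, hk', show (k : ℕ) ≠ j + 1 by omega]
  · simp

end Zmat

theorem diagonal_mul_vandermonde_sub_vandermonde_mul_Zmat {K : Type*} [Field K] {n : ℕ}
    (s : Fin n → K) (e : K) :
    diagonal s * vandermonde s - vandermonde s * Zmat n e
      = vecMulVec (fun i => s i ^ n - e) (fun j : Fin n => if (j : ℕ) = n - 1 then 1 else 0) := by
  ext i j
  rw [Matrix.sub_apply, diagonal_mul, vecMulVec_apply, vandermonde_apply]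
  by_cases hj : (j : ℕ) = n - 1
  · have hpow : s i ^ n = s i * s i ^ (j : ℕ) := by
      rw [← pow_succ', hj, Nat.sub_add_cancel j.pos]
    rw [mul_Zmat_apply_of_eq_pred e _ i j hj, if_pos hj, vandermonde_apply, hpow]
    simp
  · have hj' : (j : ℕ) + 1 < n := by omega
    rw [mul_Zmat_apply_of_succ_lt e _ i j hj', if_neg hj, vandermonde_apply, pow_succ]
    ring

theorem vandermonde_displacement_general {K : Type*} [Field K] (n : ℕ)
    (s : Fin n → K) (e : K)
    (V : Matrix (Fin n) (Fin n) K) (hV : ∀ i j, V i j = s i ^ (j : ℕ)) :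
    V * Zmat n e
      = Matrix.diagonal s * V
        - (Matrix.of fun i j => if (j : ℕ) = n - 1 then s i ^ n - e else 0 : Matrix (Fin n) (Fin n) K) ∧
    (Matrix.diagonal s * V - V * Zmat n e).rank ≤ 1 ∧
    ((∀ i, s i ^ n = e) → (Matrix.diagonal s * V - V * Zmat n e).rank = 0) := by
  obtain rfl : V = vandermonde s := Matrix.ext hV
  have hdisp := diagonal_mul_vandermonde_sub_vandermonde_mul_Zmat s e
  refine ⟨?_, ?_, fun hs => ?_⟩
  · rw [eq_sub_iff_add_eq, ← eq_sub_iff_add_eq', hdisp]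
    ext i j
    simp [vecMulVec_apply]
  · exact hdisp ▸ rank_vecMulVec_le _ _
  · have hu : (fun i => s i ^ n - e) = 0 := funext fun i => sub_eq_zero.mpr (hs i)
    rw [hdisp, hu, zero_vecMulVec, rank_zero]

theorem vandermonde_displacement {K : Type*} [Field K] (n : ℕ) (hn : 0 < n)
    (s : Fin n → K) (e : K)
    (V : Matrix (Fin n) (Fin n) K) (hV : ∀ i j, V i j = s i ^ (j : ℕ)) :
    V * Zmat n e
      = Matrix.diagonal s * V
        - (Matrix.of fun i j => if (j : ℕ) = n - 1 then s i ^ n - e else 0 : Matrix (Fin n) (Fin n) K) ∧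
    (Matrix.diagonal s * V - V * Zmat n e).rank ≤ 1 ∧
    ((∀ i, s i ^ n = e) → (Matrix.diagonal s * V - V * Zmat n e).rank = 0) :=
  vandermonde_displacement_general n s e V hV
end

section
/- Let s_1,...,s_n, t_1,...,t_n be 2n pairwise distinct complex numbers, t(x) = Π_{j=1}^n (x - t_j). Then the Cauchy matrix factors as C_{s,t} = diag(1/t(s_i))_{i=1}^n · V_s · V_t^{-1} · diag(t'(t_j))_{j=1}^n, where V_s = (s_i^{j-1}) and V_t = (t_i^{j-1}) are Vandermonde matrices and t' is the derivative of t. -/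
/-!
Partial fractions: for a polynomial `f` of degree `< n` and `x` off the nodes `t_k`,
`f(x) / t(x) = ∑_k f(t_k) / ((x - t_k) t'(t_k))`, which is Lagrange interpolation of `f` at the
nodes divided by `t(x)`. Taking `f = X^j` and `x = s_i` gives, entrywise,
`C_{s,t} · diag(1/t'(t_j)) · V_t = diag(1/t(s_i)) · V_s`, and `V_t` is invertible.
-/

open Finset Polynomial Matrix Lagrange

theorem Lagrange.eval_div_eval_nodal_eq_sum {F ι : Type*} [Field F] [DecidableEq ι]
    {s : Finset ι} {v : ι → F} {f : F[X]} {x : F} (hvs : Set.InjOn v s) (hf : f.degree < #s)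
    (hx : ∀ i ∈ s, x ≠ v i) :
    f.eval x / (nodal s v).eval x = ∑ i ∈ s, nodalWeight s v i * (x - v i)⁻¹ * f.eval (v i) := by
  conv_lhs => rw [eq_interpolate hvs hf, eval_interpolate_not_at_node _ hx]
  exact mul_div_cancel_left₀ _ (eval_nodal_not_at_node hx)

theorem cauchy_mul_diagonal_nodalWeight_mul_vandermonde {F : Type*} [Field F] {n : ℕ}
    (s t : Fin n → F) (ht : Function.Injective t) (hst : ∀ i j, s i ≠ t j) :
    of (fun i j => (s i - t j)⁻¹) * diagonal (nodalWeight univ t) * vandermonde t =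
      diagonal (fun i => (∏ j, (s i - t j))⁻¹) * vandermonde s := by
  ext i j
  have hpow := eval_div_eval_nodal_eq_sum (s := univ) (f := X ^ (j : ℕ)) (x := s i) ht.injOn
    (by simp) (fun k _ => hst i k)
  simp only [eval_pow, eval_X, eval_nodal] at hpow
  rw [mul_apply, diagonal_mul, vandermonde_apply, inv_mul_eq_div, hpow]
  simp only [mul_diagonal, of_apply, vandermonde_apply]
  exact sum_congr rfl fun k _ => by ring

theorem cauchy_vandermonde_factorization_general (n : ℕ) (s t : Fin n → ℂ)
    (ht : Function.Injective t)
    (hst : ∀ i j, s i ≠ t j)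
    (C Vs Vt : Matrix (Fin n) (Fin n) ℂ)
    (hC : ∀ i j, C i j = (s i - t j)⁻¹)
    (hVs : ∀ i j, Vs i j = s i ^ (j : ℕ))
    (hVt : ∀ i j, Vt i j = t i ^ (j : ℕ)) :
    C = Matrix.diagonal (fun i => (∏ j, (s i - t j))⁻¹) * Vs * Vt⁻¹ *
          Matrix.diagonal (fun j => ∏ k ∈ Finset.univ.erase j, (t j - t k)) := by
  obtain rfl : C = of fun i j => (s i - t j)⁻¹ := Matrix.ext hC
  obtain rfl : Vs = vandermonde s := Matrix.ext hVs
  obtain rfl : Vt = vandermonde t := Matrix.ext hVt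
  have hdet : IsUnit (vandermonde t).det := (det_vandermonde_ne_zero_iff.mpr ht).isUnit
  have hweight : (fun j => ∏ k ∈ univ.erase j, (t j - t k)) = fun j => (nodalWeight univ t j)⁻¹ :=
    funext fun j => by rw [nodalWeight, prod_inv_distrib, inv_inv]
  have hdiag :
      diagonal (nodalWeight univ t) * diagonal (fun j => (nodalWeight univ t j)⁻¹) = 1 := by
    rw [diagonal_mul_diagonal, ← diagonal_one]
    exact congrArg diagonal <| funext fun j =>
      mul_inv_cancel₀ (nodalWeight_ne_zero ht.injOn (mem_univ j))
  rw [hweight, ← cauchy_mul_diagonal_nodalWeight_mul_vandermonde s t ht hst,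
    mul_nonsing_inv_cancel_right _ _ hdet, mul_assoc, hdiag, mul_one]

theorem cauchy_vandermonde_factorization (n : ℕ) (s t : Fin n → ℂ)
    (hs : Function.Injective s) (ht : Function.Injective t)
    (hst : ∀ i j, s i ≠ t j)
    (C Vs Vt : Matrix (Fin n) (Fin n) ℂ)
    (hC : ∀ i j, C i j = (s i - t j)⁻¹)
    (hVs : ∀ i j, Vs i j = s i ^ (j : ℕ))
    (hVt : ∀ i j, Vt i j = t i ^ (j : ℕ)) :
    C = Matrix.diagonal (fun i => (∏ j, (s i - t j))⁻¹) * Vs * Vt⁻¹ *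
          Matrix.diagonal (fun j => ∏ k ∈ Finset.univ.erase j, (t j - t k)) :=
  cauchy_vandermonde_factorization_general n s t ht hst C Vs Vt hC hVs hVt
end

section
/- Let s_1,...,s_n, t_1,...,t_n be 2n distinct scalars with C = C_{s,t} = (1/(s_i - t_j)) the (nonsingular) Cauchy matrix. Then for any square matrices A (compatible with rows of M) and any matrix M: rank(A·(MC) - (MC)·D_t) ≤ rank(A·M - M·D_s) + 1, where D_s = diag(s_i), D_t = diag(t_j). That is, post-multiplication by a Cauchy matrix changes the diagonal operator matrix at the cost of increasing displacement rank by at most 1. -/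
/-!
With `Δ_{A,B}(M) = A M - M B`, the displacement operator satisfies the Leibniz rule
`Δ_{A,D_t}(M C) = Δ_{A,D_s}(M) C + M Δ_{D_s,D_t}(C)`, and for the Cauchy matrix
`Δ_{D_s,D_t}(C) = e eᵀ`, since `(s_i - t_j) / (s_i - t_j) = 1`. The rank is subadditive and
does not grow under multiplication, so the second summand costs at most one.
-/

open Matrix

namespace Matrix

variable {K R : Type*} {l m n : Type*}

theorem rank_add_le_s18 [Field K] [Finite m] [Fintype n] (A B : Matrix m n K) :
    (A + B).rank ≤ A.rank + B.rank := by
  rw [rank, rank, rank, mulVecLin_add]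
  exact (Submodule.finrank_mono (LinearMap.range_add_le _ _)).trans
    (Submodule.finrank_add_le_finrank_add_finrank _ _)

def displacement [Ring R] [Fintype m] [Fintype n] (A : Matrix m m R) (B : Matrix n n R)
    (M : Matrix m n R) : Matrix m n R :=
  A * M - M * B

theorem displacement_mul_s18 [Ring R] [Fintype l] [Fintype m] [Fintype n] (A : Matrix l l R)
    (B : Matrix m m R) (D : Matrix n n R) (M : Matrix l m R) (C : Matrix m n R) :
    displacement A D (M * C) = displacement A B M * C + M * displacement B D C := by
  simp only [displacement, Matrix.mul_sub, Matrix.sub_mul, Matrix.mul_assoc]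
  abel

theorem rank_displacement_mul_le [Field K] [Fintype l] [Fintype m] [Fintype n]
    (A : Matrix l l K) (B : Matrix m m K) (D : Matrix n n K) (M : Matrix l m K)
    (C : Matrix m n K) :
    (displacement A D (M * C)).rank ≤ (displacement A B M).rank + (displacement B D C).rank := by
  rw [displacement_mul_s18 A B]
  exact (rank_add_le_s18 _ _).trans (add_le_add (rank_mul_le_left _ _) (rank_mul_le_right _ _))

def cauchyMatrix [Field K] (s : m → K) (t : n → K) : Matrix m n K :=
  of fun i j => (s i - t j)⁻¹

theorem displacement_diagonal_cauchyMatrix [Field K] [Fintype m] [Fintype n] [DecidableEq m]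
    [DecidableEq n] {s : m → K} {t : n → K} (hst : ∀ i j, s i ≠ t j) :
    displacement (diagonal s) (diagonal t) (cauchyMatrix s t) = vecMulVec 1 1 := by
  ext i j
  have hne : s i - t j ≠ 0 := sub_ne_zero.mpr (hst i j)
  simp only [displacement, cauchyMatrix, sub_apply, diagonal_mul, mul_diagonal, of_apply,
    vecMulVec_apply, Pi.one_apply, mul_one]
  rw [mul_comm _ (t j), ← sub_mul, mul_inv_cancel₀ hne]

theorem rank_displacement_diagonal_cauchyMatrix_le_one [Field K] [Fintype m] [Fintype n]
    [DecidableEq m] [DecidableEq n] {s : m → K} {t : n → K} (hst : ∀ i j, s i ≠ t j) :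
    (displacement (diagonal s) (diagonal t) (cauchyMatrix s t)).rank ≤ 1 := by
  rw [displacement_diagonal_cauchyMatrix hst]
  exact rank_vecMulVec_le _ _

end Matrix

theorem cauchy_postmultiplication_displacement_general {K : Type*} [Field K] (m n : ℕ)
    (s t : Fin n → K)
    (hst : ∀ i j, s i ≠ t j)
    (C : Matrix (Fin n) (Fin n) K) (hC : ∀ i j, C i j = (s i - t j)⁻¹)
    (M : Matrix (Fin m) (Fin n) K) (A : Matrix (Fin m) (Fin m) K) :
    (A * (M * C) - (M * C) * Matrix.diagonal t).rank
      ≤ (A * M - M * Matrix.diagonal s).rank + 1 := by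
  obtain rfl : C = cauchyMatrix s t := Matrix.ext hC
  calc (displacement A (diagonal t) (M * cauchyMatrix s t)).rank
      ≤ (displacement A (diagonal s) M).rank
        + (displacement (diagonal s) (diagonal t) (cauchyMatrix s t)).rank :=
        rank_displacement_mul_le _ _ _ _ _
    _ ≤ (displacement A (diagonal s) M).rank + 1 :=
        add_le_add_right (rank_displacement_diagonal_cauchyMatrix_le_one hst) _

theorem cauchy_postmultiplication_displacement {K : Type*} [Field K] (m n : ℕ)
    (s t : Fin n → K)
    (hs : Function.Injective s) (ht : Function.Injective t)
    (hst : ∀ i j, s i ≠ t j)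
    (C : Matrix (Fin n) (Fin n) K) (hC : ∀ i j, C i j = (s i - t j)⁻¹)
    (M : Matrix (Fin m) (Fin n) K) (A : Matrix (Fin m) (Fin m) K) :
    (A * (M * C) - (M * C) * Matrix.diagonal t).rank
      ≤ (A * M - M * Matrix.diagonal s).rank + 1 :=
  cauchy_postmultiplication_displacement_general m n s t hst C hC M A
end
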